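/- Let X be a real vector space, 0 < p < 1, and x ∈ X a nonzero vector. Then the p-convex hull of the singleton {x} equals the set { t·x : t ∈ (0, 1] }. -/
import Mathlib


open scoped Pointwise

/-- A set `A` is `p`-convex if for all `x y ∈ A` and `s, t ∈ [0,1]` with
`s^p + t^p = 1`, the point `s^(1/p) • x + t^(1/p) • y` belongs to `A`. -/
def PConvex {X : Type*} [AddCommGroup X] [Module ℝ X] (p : ℝ) (A : Set X) : Prop :=
  ∀ x ∈ A, ∀ y ∈ A, ∀ s t : ℝ, s ∈ Set.Icc (0:ℝ) 1 → t ∈ Set.Icc (0:ℝ) 1 →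
    s ^ p + t ^ p = 1 → s ^ (1/p) • x + t ^ (1/p) • y ∈ A


/-- The `p`-convex hull of a set: the smallest `p`-convex set containing it. -/
def pConvexHull {X : Type*} [AddCommGroup X] [Module ℝ X] (p : ℝ) (S : Set X) : Set X :=
  ⋂₀ {B : Set X | PConvex p B ∧ S ⊆ B}

lemma pConvexHull_pconvex {X : Type*} [AddCommGroup X] [Module ℝ X] (p : ℝ) (S : Set X) :
    PConvex p (pConvexHull p S) := by
  intro a ha b hb s t hs ht hst
  intro B hB
  exact hB.1 a (ha B hB) b (hb B hB) s t hs ht hst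

lemma subset_pConvexHull {X : Type*} [AddCommGroup X] [Module ℝ X] (p : ℝ) (S : Set X) :
    S ⊆ pConvexHull p S := fun y hy B hB => hB.2 hy

/-- key IVT lemma : every `r ∈ [2^(1-q), 1]` is of the form `u^q+(1-u)^q`. -/
lemma ivt_aux {q : ℝ} (hq : 0 < q) {r : ℝ} (hr : r ∈ Set.Icc ((2:ℝ) ^ (1 - q)) 1) :
    ∃ u ∈ Set.Icc (0:ℝ) 1, u ^ q + (1 - u) ^ q = r := by
  set g : ℝ → ℝ := fun u => u ^ q + (1 - u) ^ q with hg
  have hcont : ContinuousOn g (Set.Icc (1/2 : ℝ) 1) := by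
    apply ContinuousOn.add
    · exact (Real.continuous_rpow_const hq.le).continuousOn
    · exact ((Real.continuous_rpow_const hq.le).comp (by continuity)).continuousOn
  have hg1 : g 1 = 1 := by
    simp [hg, Real.one_rpow, Real.zero_rpow hq.ne']
  have hgh : g (1/2) = (2:ℝ) ^ (1 - q) := by
    have h2 : ((1:ℝ)/2) ^ q = (2:ℝ) ^ (-q) := by
      rw [one_div, Real.inv_rpow (by norm_num), ← Real.rpow_neg (by norm_num)]
    have : g (1/2) = 2 * ((1:ℝ)/2) ^ q := by
      simp [hg]; ring
    rw [this, h2, show (1:ℝ) - q = 1 + (-q) by ring,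
      Real.rpow_add (by norm_num), Real.rpow_one]
  have key : Set.Icc (g 1) (g (1/2)) ∪ Set.Icc (g (1/2)) (g 1)
      ⊆ g '' Set.Icc (1/2 : ℝ) 1 := by
    apply Set.union_subset
    · exact intermediate_value_Icc' (by norm_num) hcont
    · exact intermediate_value_Icc (by norm_num) hcont
  have hrmem : r ∈ Set.Icc (g (1/2)) (g 1) := by rw [hg1, hgh]; exact hr
  obtain ⟨u, hu, hur⟩ := key (Set.mem_union_right _ hrmem)
  exact ⟨u, ⟨le_trans (by norm_num) hu.1, hu.2⟩, hur⟩

theorem stmt4 {X : Type*} [AddCommGroup X] [Module ℝ X] {p : ℝ} (hp : 0 < p) (hp1 : p < 1)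
    {x : X} (hx : x ≠ 0) :
    pConvexHull p {x} = {y : X | ∃ t : ℝ, 0 < t ∧ t ≤ 1 ∧ y = t • x} := by
  have hpne : p ≠ 0 := hp.ne'
  have hpinv : (1:ℝ) ≤ 1/p := by
    rw [le_div_iff₀ hp]; linarith
  apply le_antisymm
  · -- hull ⊆ RHS : RHS is p-convex and contains x
    apply Set.sInter_subset_of_mem
    constructor
    · rintro a ⟨t1, ht1p, ht1le, rfl⟩ b ⟨t2, ht2p, ht2le, rfl⟩ s t hs ht hst
      refine ⟨s ^ (1/p) * t1 + t ^ (1/p) * t2, ?_, ?_, ?_⟩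
      · -- positivity : one of s, t positive
        have : 0 < s ∨ 0 < t := by
          by_contra h
          push_neg at h
          have hs0 : s = 0 := le_antisymm (h.1) hs.1
          have ht0 : t = 0 := le_antisymm (h.2) ht.1
          rw [hs0, ht0, Real.zero_rpow hpne] at hst
          norm_num at hst
        rcases this with hs0 | ht0
        · have h1 : 0 < s ^ (1/p) * t1 := mul_pos (Real.rpow_pos_of_pos hs0 _) ht1p
          have h2 : 0 ≤ t ^ (1/p) * t2 :=
            mul_nonneg (Real.rpow_nonneg ht.1 _) ht2p.le
          linarith
        · have h1 : 0 < t ^ (1/p) * t2 := mul_pos (Real.rpow_pos_of_pos ht0 _) ht2p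
          have h2 : 0 ≤ s ^ (1/p) * t1 :=
            mul_nonneg (Real.rpow_nonneg hs.1 _) ht1p.le
          linarith
      · -- ≤ 1
        have key : ∀ u : ℝ, u ∈ Set.Icc (0:ℝ) 1 → u ^ (1/p) ≤ u ^ p := by
          intro u hu
          rcases eq_or_lt_of_le hu.1 with h0 | h0
          · rw [← h0, Real.zero_rpow hpne, Real.zero_rpow (by positivity : (1:ℝ)/p ≠ 0)]
          · exact Real.rpow_le_rpow_of_exponent_ge h0 hu.2 (le_trans hp1.le hpinv)
        have hb1 : s ^ (1/p) * t1 ≤ s ^ (1/p) :=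
          mul_le_of_le_one_right (Real.rpow_nonneg hs.1 _) ht1le
        have hb2 : t ^ (1/p) * t2 ≤ t ^ (1/p) :=
          mul_le_of_le_one_right (Real.rpow_nonneg ht.1 _) ht2le
        have := key s hs
        have := key t ht
        linarith
      · rw [smul_smul, smul_smul, ← add_smul]
    · intro y hy
      rw [Set.mem_singleton_iff] at hy
      exact ⟨1, one_pos, le_refl 1, by rw [hy, one_smul]⟩
  · -- RHS ⊆ hull
    rintro y ⟨t, htp, htle, rfl⟩
    set q : ℝ := (1/p) * (1/p) with hq
    have hq0 : 0 < q := by positivity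
    have hq1 : 1 < q := by
      have : 1 < 1/p := by rw [lt_div_iff₀ hp]; linarith
      calc (1:ℝ) < 1/p := this
        _ = (1/p) * 1 := (mul_one _).symm
        _ ≤ (1/p) * (1/p) := by
            apply mul_le_mul_of_nonneg_left this.le (by positivity)
    set m : ℝ := (2:ℝ) ^ (1 - q) with hm
    have hm0 : 0 < m := Real.rpow_pos_of_pos (by norm_num) _
    have hm1 : m < 1 := by
      rw [hm, ← Real.rpow_zero (2:ℝ)]
      exact Real.rpow_lt_rpow_of_exponent_lt (by norm_num) (by linarith)
    have hxmem : x ∈ pConvexHull p {x} := subset_pConvexHull p {x} rfl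
    -- closure step : multiplying a member by r ∈ [m, 1]
    have step : ∀ c : ℝ, c • x ∈ pConvexHull p {x} → ∀ r ∈ Set.Icc m 1,
        (r * c) • x ∈ pConvexHull p {x} := by
      intro c hc r hr
      obtain ⟨u, hu, hur⟩ := ivt_aux hq0 hr
      have hu1 : (0:ℝ) ≤ 1 - u := by linarith [hu.2]
      set s : ℝ := u ^ (1/p) with hs
      set t' : ℝ := (1 - u) ^ (1/p) with ht'
      have hsmem : s ∈ Set.Icc (0:ℝ) 1 :=
        ⟨Real.rpow_nonneg hu.1 _, Real.rpow_le_one hu.1 hu.2 (by positivity)⟩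
      have ht'mem : t' ∈ Set.Icc (0:ℝ) 1 :=
        ⟨Real.rpow_nonneg hu1 _, Real.rpow_le_one hu1 (by linarith [hu.1]) (by positivity)⟩
      have hsp : s ^ p = u := by
        rw [hs, ← Real.rpow_mul hu.1]
        rw [one_div, inv_mul_cancel₀ (ne_of_gt hp), Real.rpow_one]
      have ht'p : t' ^ p = 1 - u := by
        rw [ht', ← Real.rpow_mul hu1]
        rw [one_div, inv_mul_cancel₀ (ne_of_gt hp), Real.rpow_one]
      have hsum : s ^ p + t' ^ p = 1 := by rw [hsp, ht'p]; ring
      have hmem := pConvexHull_pconvex p {x} (c • x) hc (c • x) hc s t' hsmem ht'mem hsum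
      have hsq : s ^ (1/p) = u ^ q := by
        rw [hs, ← Real.rpow_mul hu.1, hq]
      have ht'q : t' ^ (1/p) = (1 - u) ^ q := by
        rw [ht', ← Real.rpow_mul hu1, hq]
      have : s ^ (1/p) • (c • x) + t' ^ (1/p) • (c • x) = (r * c) • x := by
        rw [smul_smul, smul_smul, ← add_smul, ← add_mul, hsq, ht'q, hur]
      rwa [this] at hmem
    -- induction : m^n ≤ c ≤ 1 implies c • x in hull
    have ind : ∀ n : ℕ, ∀ c : ℝ, m ^ n ≤ c → c ≤ 1 → c • x ∈ pConvexHull p {x} := by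
      intro n
      induction n with
      | zero =>
        intro c h1 h2
        have : c = 1 := le_antisymm h2 (by simpa using h1)
        rw [this, one_smul]; exact hxmem
      | succ n ih =>
        intro c h1 h2
        by_cases hcm : m ≤ c
        · have := step 1 (by rwa [one_smul]) c ⟨hcm, h2⟩
          rwa [mul_one] at this
        · push_neg at hcm
          have hc0 : 0 < c := lt_of_lt_of_le (by positivity : (0:ℝ) < m ^ (n+1)) h1
          have h1' : m ^ n ≤ c / m := by
            rw [le_div_iff₀ hm0]
            calc m ^ n * m = m ^ (n + 1) := by ring
              _ ≤ c := h1
          have h2' : c / m ≤ 1 := by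
            rw [div_le_one hm0]; linarith
          have := step (c / m) (ih (c / m) h1' h2') m ⟨le_refl m, hm1.le⟩
          rwa [mul_div_cancel₀ c (ne_of_gt hm0)] at this
    obtain ⟨n, hn⟩ := exists_pow_lt_of_lt_one htp hm1
    exact ind n t hn.le htle
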